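/- Let L_k denote the Lucas numbers (L₀ = 2, L₁ = 1, L_k = L_{k−1} + L_{k−2}) and F_k the Fibonacci numbers. The spectral norm of the n×n circulant matrix C(L₀, L₁, …, L_{n−1}) equals F_{n+2} + F_n − 1. -/

import Mathlib

/-!
The circulant matrix of `L₀, …, L_{n-1}` has nonnegative entries and every row and every column
sums to `s = L₀ + ⋯ + L_{n-1}`. The Schur test (Cauchy–Schwarz with the entries as weights) bounds
its spectral norm by `s`, and the all-ones vector is an eigenvector with eigenvalue `s`, so the
norm is exactly `s`. Summing the recurrence telescopes: `s = L_{n+1} - L₁ = F_{n+2} + F_n - 1`.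
-/

open scoped Matrix.Norms.L2Operator

open Finset Matrix

namespace Matrix

variable {m n : Type*} [Fintype m] [Fintype n] [DecidableEq n]

theorem l2_opNorm_le_sqrt_of_sum_row_le_of_sum_col_le (A : Matrix m n ℝ) {r c : ℝ}
    (hA : ∀ i j, 0 ≤ A i j) (hr : 0 ≤ r) (hrow : ∀ i, ∑ j, A i j ≤ r)
    (hcol : ∀ j, ∑ i, A i j ≤ c) :
    ‖A‖ ≤ √(r * c) := by
  rw [l2_opNorm_def]
  refine ContinuousLinearMap.opNorm_le_bound _ (Real.sqrt_nonneg _) fun x => ?_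
  have hrow_sq : ∀ i, (A *ᵥ x) i ^ 2 ≤ r * ∑ j, A i j * x j ^ 2 := fun i =>
    calc (A *ᵥ x) i ^ 2 ≤ (∑ j, A i j) * ∑ j, A i j * x j ^ 2 :=
          sum_sq_le_sum_mul_sum_of_sq_le_mul _ (fun j _ => hA i j)
            (fun j _ => mul_nonneg (hA i j) (sq_nonneg _)) (fun j _ => le_of_eq (by ring))
      _ ≤ r * ∑ j, A i j * x j ^ 2 := by
          gcongr
          · exact sum_nonneg fun j _ => mul_nonneg (hA i j) (sq_nonneg _)
          · exact hrow i
  have hsq : ∑ i, (A *ᵥ x) i ^ 2 ≤ r * c * ∑ j, x j ^ 2 :=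
    calc ∑ i, (A *ᵥ x) i ^ 2 ≤ ∑ i, r * ∑ j, A i j * x j ^ 2 := sum_le_sum fun i _ => hrow_sq i
      _ = r * ∑ j, (∑ i, A i j) * x j ^ 2 := by rw [← mul_sum, sum_comm]; simp_rw [sum_mul]
      _ ≤ r * ∑ j, c * x j ^ 2 := by
          gcongr with j
          exact hcol j
      _ = r * c * ∑ j, x j ^ 2 := by rw [← mul_sum, mul_assoc]
  rw [EuclideanSpace.norm_eq, EuclideanSpace.norm_eq, ← Real.sqrt_mul' _ (by positivity)]
  gcongr
  simpa using hsq

theorem norm_le_l2_opNorm_of_mulVec_eq_smul {𝕜 : Type*} [RCLike 𝕜] (A : Matrix n n 𝕜)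
    {x : n → 𝕜} {s : 𝕜} (hx : x ≠ 0) (hAx : A *ᵥ x = s • x) : ‖s‖ ≤ ‖A‖ := by
  have hx_pos : 0 < ‖(WithLp.toLp 2 x : EuclideanSpace 𝕜 n)‖ := by simpa using hx
  refine le_of_mul_le_mul_right ?_ hx_pos
  simpa [hAx, norm_smul] using A.l2_opNorm_mulVec (WithLp.toLp 2 x)

theorem l2_opNorm_eq_of_sum_row_eq_of_sum_col_eq [Nonempty n] (A : Matrix n n ℝ) {s : ℝ}
    (hA : ∀ i j, 0 ≤ A i j) (hrow : ∀ i, ∑ j, A i j = s) (hcol : ∀ j, ∑ i, A i j = s) :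
    ‖A‖ = s := by
  have hs : 0 ≤ s := hrow (Classical.arbitrary n) ▸ sum_nonneg fun j _ => hA _ j
  refine le_antisymm ?_ ?_
  · simpa [Real.sqrt_mul_self hs] using l2_opNorm_le_sqrt_of_sum_row_le_of_sum_col_le A hA hs
      (fun i => (hrow i).le) (fun j => (hcol j).le)
  · have h_ones : A *ᵥ 1 = s • 1 := funext fun i => by simp [mulVec, dotProduct, hrow]
    simpa [abs_of_nonneg hs] using norm_le_l2_opNorm_of_mulVec_eq_smul A one_ne_zero h_ones

theorem l2_opNorm_circulant {G : Type*} [AddGroup G] [Fintype G] [DecidableEq G] {v : G → ℝ}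
    (hv : ∀ g, 0 ≤ v g) : ‖circulant v‖ = ∑ g, v g :=
  l2_opNorm_eq_of_sum_row_eq_of_sum_col_eq _ (fun i j => hv (i - j))
    (fun i => (Equiv.subLeft i).sum_comp v) (fun j => (Equiv.subRight j).sum_comp v)

end Matrix

section FibRec

variable {M : Type*} [AddCommMonoid M] {L : ℕ → M} (hL : ∀ k, L (k + 2) = L (k + 1) + L k)
include hL

theorem sum_range_add_eq_of_fib_rec (n : ℕ) : ∑ k ∈ range n, L k + L 1 = L (n + 1) := by
  induction n with
  | zero => simp
  | succ n ih => rw [sum_range_succ, add_right_comm, ih, hL]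

theorem eq_fib_smul_add_fib_smul_of_fib_rec (n : ℕ) :
    L (n + 1) = Nat.fib (n + 1) • L 1 + Nat.fib n • L 0 := by
  induction n using Nat.twoStepInduction with
  | zero => simp
  | one => simp [hL 0]
  | more n ih0 ih1 =>
    rw [show n + 2 + 1 = n + 1 + 2 from rfl, hL, ih0, ih1]
    simp only [Nat.fib_add_two, add_smul]
    abel

end FibRec

theorem spectral_norm_circulant_lucas_general
    (L : ℕ → ℕ) (hL0 : L 0 = 2) (hL1 : L 1 = 1)
    (hLrec : ∀ m : ℕ, L (m + 2) = L (m + 1) + L m)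
    (n : ℕ) :
    ‖(Matrix.of fun i j : Fin n => (L ((j - i : Fin n) : ℕ) : ℝ))‖ =
      (Nat.fib (n + 2) : ℝ) + Nat.fib n - 1 := by
  obtain rfl | hn := n.eq_zero_or_pos
  · simp [Subsingleton.elim _ (0 : Matrix (Fin 0) (Fin 0) ℝ)]
  have : NeZero n := ⟨hn.ne'⟩
  have hsum : ∑ k ∈ range n, L k + 1 = Nat.fib (n + 2) + Nat.fib n := by
    rw [← hL1, sum_range_add_eq_of_fib_rec hLrec, eq_fib_smul_add_fib_smul_of_fib_rec hLrec, hL0,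
      hL1, Nat.fib_add_two, smul_eq_mul, smul_eq_mul]
    ring
  have hC : Matrix.of (fun i j : Fin n => (L ((j - i : Fin n) : ℕ) : ℝ)) =
      (circulant fun k : Fin n => (L k : ℝ))ᴴ := by
    ext i j
    simp
  rw [hC, l2_opNorm_conjTranspose, l2_opNorm_circulant fun _ => Nat.cast_nonneg _,
    Fin.sum_univ_eq_sum_range (fun k => (L k : ℝ)), eq_sub_iff_add_eq]
  exact_mod_cast hsum

theorem spectral_norm_circulant_lucas
    (L : ℕ → ℕ) (hL0 : L 0 = 2) (hL1 : L 1 = 1)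
    (hLrec : ∀ m : ℕ, L (m + 2) = L (m + 1) + L m)
    (n : ℕ) (hn : 1 ≤ n) :
    ‖(Matrix.of fun i j : Fin n => (L ((j - i : Fin n) : ℕ) : ℝ))‖ =
      (Nat.fib (n + 2) : ℝ) + Nat.fib n - 1 :=
  spectral_norm_circulant_lucas_general L hL0 hL1 hLrec n
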